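/- The intertwining operators fix the image of the localization map on invariants: for every w ∈ W and every W-invariant element f ∈ ℤ[P], one has I_w( f · ∏_{α∈Φ⁺} (1 − e(−α)) ) = f · ∏_{α∈Φ⁺} (1 − e(−α)). -/

import Mathlib

set_option linter.unusedSectionVars false

open Finset

/-- A finite reduced crystallographic root system `Φ` spanning a real vector space `E`,
together with coroots `α∨` (`coroot α λ = ⟨λ, α∨⟩`) and a linear functional `posFun`
(nonvanishing on the roots) cutting out the fixed positive system `Φ⁺`. -/
structure PreWeylContext (E : Type) [AddCommGroup E] [Module ℝ E] : Type where
  Φ : Finset E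
  coroot : E → (E →ₗ[ℝ] ℝ)
  posFun : E →ₗ[ℝ] ℝ
  span_eq_top : Submodule.span ℝ (Φ : Set E) = ⊤
  root_ne_zero : ∀ α ∈ Φ, α ≠ 0
  coroot_self : ∀ α ∈ Φ, coroot α α = 2
  reflect_mem : ∀ α ∈ Φ, ∀ β ∈ Φ, β - coroot α β • α ∈ Φ
  crystallographic : ∀ α ∈ Φ, ∀ β ∈ Φ, ∃ n : ℤ, coroot α β = n
  reduced : ∀ α ∈ Φ, ∀ t : ℝ, t • α ∈ Φ → t = 1 ∨ t = -1
  posFun_ne_zero : ∀ α ∈ Φ, posFun α ≠ 0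

namespace PreWeylContext

variable {E : Type} [AddCommGroup E] [Module ℝ E] (C : PreWeylContext E)

/-- The positive system `Φ⁺`. -/
noncomputable def pos : Finset E := C.Φ.filter fun α => 0 < C.posFun α

theorem pos_subset : C.pos ⊆ C.Φ := Finset.filter_subset _ _

/-- The simple roots: the indecomposable positive roots. -/
noncomputable def simple [DecidableEq E] : Finset E :=
  C.pos.filter fun α => ¬ ∃ β ∈ C.pos, ∃ γ ∈ C.pos, α = β + γ

theorem simple_subset [DecidableEq E] : C.simple ⊆ C.Φ :=
  fun x h => C.pos_subset (Finset.mem_of_mem_filter x h)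

/-- `ρ`, the half sum of the positive roots. -/
noncomputable def rho : E := (2 : ℝ)⁻¹ • ∑ α ∈ C.pos, α

/-- `g` is the reflection `s_α` in the root `α`. -/
def IsReflection (g : E ≃ₗ[ℝ] E) (α : E) : Prop := ∀ y, g y = y - C.coroot α y • α

/-- The Weyl group `W`, generated by the reflections in the roots. -/
def weylGroup : Subgroup (E ≃ₗ[ℝ] E) :=
  Subgroup.closure {g | ∃ α ∈ C.Φ, C.IsReflection g α}

/-- The weight lattice `P = {λ ∈ E : ⟨λ, α∨⟩ ∈ ℤ for all α ∈ Φ}`. -/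
def P : AddSubgroup E :=
  ⨅ α ∈ C.Φ, AddSubgroup.comap (C.coroot α).toAddMonoidHom (Int.castAddHom ℝ).range

/-- The length function `ℓ` on the Weyl group: the minimal length of a word
in the simple reflections. -/
noncomputable def len [DecidableEq E] (w : C.weylGroup) : ℕ :=
  sInf {n | ∃ l : List C.weylGroup,
    (∀ s ∈ l, ∃ α ∈ C.simple, C.IsReflection s.1 α) ∧ l.prod = w ∧ l.length = n}

end PreWeylContext

/-- Full context: in addition, `ρ` and the roots lie in the weight lattice `P`,
and `P` is stable under the Weyl group (all automatic for crystallographic root systems). -/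
structure WeylContext (E : Type) [AddCommGroup E] [Module ℝ E] extends PreWeylContext E where
  rho_mem : toPreWeylContext.rho ∈ toPreWeylContext.P
  root_mem : ∀ α ∈ toPreWeylContext.Φ, α ∈ toPreWeylContext.P
  weyl_stable : ∀ g ∈ toPreWeylContext.weylGroup, ∀ x ∈ toPreWeylContext.P, g x ∈ toPreWeylContext.P

namespace WeylContext

variable {E : Type} [AddCommGroup E] [Module ℝ E] [DecidableEq E] (C : WeylContext E)

/-- The basis element `e(λ)` of the group algebra `ℤ[P]`. -/
noncomputable def e (x : C.P) : AddMonoidAlgebra ℤ C.P := AddMonoidAlgebra.single x 1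

/-- `ρ` as an element of `P`. -/
noncomputable def rhoP : C.P := ⟨C.rho, C.rho_mem⟩

/-- A root, as an element of `P`. -/
def rootP {α : E} (h : α ∈ C.Φ) : C.P := ⟨α, C.root_mem α h⟩

/-- A positive root, as an element of `P`. -/
def posP {α : E} (h : α ∈ C.pos) : C.P := C.rootP (C.pos_subset h)

/-- The action of a Weyl group element on the weight lattice `P`. -/
def wP (w : C.weylGroup) (x : C.P) : C.P := ⟨w.1 x.1, C.weyl_stable w.1 w.2 x.1 x.2⟩

/-- The action of a Weyl group element on `ℤ[P]`: the ring automorphism with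
`w · e(λ) = e(w(λ))`, as a `ℤ`-linear map. -/
noncomputable def act (w : C.weylGroup) :
    AddMonoidAlgebra ℤ C.P →ₗ[ℤ] AddMonoidAlgebra ℤ C.P :=
  AddMonoidAlgebra.mapDomainLinearMap ℤ ℤ (C.wP w)

/-- The reflection `s_α` in a root, as a linear automorphism of `E`. -/
noncomputable def refl {α : E} (h : α ∈ C.Φ) : E ≃ₗ[ℝ] E :=
  Module.reflection (C.coroot_self α h)

theorem isReflection_refl {α : E} (h : α ∈ C.Φ) : C.IsReflection (C.refl h) α :=
  fun y => Module.reflection_apply y (C.coroot_self α h)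

theorem refl_mem {α : E} (h : α ∈ C.Φ) : C.refl h ∈ C.weylGroup :=
  Subgroup.subset_closure ⟨α, h, C.isReflection_refl h⟩

/-- The reflection `s_α` as an element of the Weyl group. -/
noncomputable def sW {α : E} (h : α ∈ C.Φ) : C.weylGroup := ⟨C.refl h, C.refl_mem h⟩

/-- The Weyl denominator `∏_{α ∈ Φ⁺} (1 - e(-α)) ∈ ℤ[P]`. -/
noncomputable def denom : AddMonoidAlgebra ℤ C.P :=
  ∏ α ∈ C.pos.attach, (1 - C.e (-C.posP α.2))

/-- The alternating Weyl sum `Σ_{w ∈ W} (-1)^{ℓ(w)} e(w(χ)) ∈ ℤ[P]`. -/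
noncomputable def weylSum [Fintype C.weylGroup] (χ : C.P) : AddMonoidAlgebra ℤ C.P :=
  ∑ w : C.weylGroup, ((-1 : ℤ) ^ C.len w) • C.e (C.wP w χ)

/-- The intertwining operator `I_w : e(ψ) ↦ (-1)^{ℓ(w)} e(w⁻¹(ψ+ρ) - ρ)` on `ℤ[P]`. -/
noncomputable def intertwiner (w : C.weylGroup) :
    AddMonoidAlgebra ℤ C.P →ₗ[ℤ] AddMonoidAlgebra ℤ C.P :=
  ((-1 : ℤ) ^ C.len w) • AddMonoidAlgebra.mapDomainLinearMap ℤ ℤ (fun ψ => C.wP w⁻¹ (ψ + C.rhoP) - C.rhoP)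

/-- The defining property of the Demazure operator `D_α` attached to a root `α`:
`(1 - e(-α)) · D_α(f) = f - e(-α) · (s_α · f)` for all `f ∈ ℤ[P]`. -/
def IsDemazure {α : E} (h : α ∈ C.Φ)
    (D : AddMonoidAlgebra ℤ C.P →ₗ[ℤ] AddMonoidAlgebra ℤ C.P) : Prop :=
  ∀ f, (1 - C.e (-C.rootP h)) * D f = f - C.e (-C.rootP h) * C.act (C.sW h) f

/-- A weight is dominant if `⟨λ, α∨⟩ ≥ 0` for every positive root `α`. -/
def Dominant (x : C.P) : Prop := ∀ α ∈ C.pos, 0 ≤ C.coroot α x.1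

/-- The `ℤ`-submodule of `W`-anti-invariant elements of `ℤ[P]`. -/
noncomputable def antiInv : Submodule ℤ (AddMonoidAlgebra ℤ C.P) where
  carrier := {f | ∀ w : C.weylGroup, C.act w f = ((-1 : ℤ) ^ C.len w) • f}
  add_mem' := fun ha hb w => by rw [map_add, ha w, hb w, smul_add]
  zero_mem' := fun w => by rw [map_zero, smul_zero]
  smul_mem' := fun c x hx w => by rw [map_smul, hx w, smul_comm]

end WeylContext

/-!
Write `I_w g = (-1)^ℓ(w) e(-ρ) · w⁻¹(e(ρ) g)`. For `W`-invariant `f` this turns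
`I_w (f Δ)` into `(-1)^ℓ(w) e(-ρ) f · w⁻¹(e(ρ) Δ)`, so everything reduces to the
anti-invariance `w (e(ρ) Δ) = (-1)^ℓ(w) e(ρ) Δ` of the Weyl denominator.

A simple reflection `s_α` permutes `Φ⁺ \ {α}` and sends `α` to `-α`; hence `s_α ρ = ρ - α`,
`s_α Δ = -e(α) Δ`, and `s_α` changes the sign of `e(ρ) Δ`. Anti-invariance follows once `W` is
generated by the simple reflections, which is proved classically with a `W`-invariant inner
product: simple roots are pairwise obtuse, hence a basis in which positive roots have
nonnegative coordinates, and the reflection in a non-simple positive root `β` is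
`s_s s_γ s_s` for a simple root `s` with `(β, s) > 0` and the lower positive root `γ = s_s β`.
-/

theorem LinearMap.BilinForm.exists_isSymm_pos_invariant {E : Type*} [AddCommGroup E]
    [Module ℝ E] [FiniteDimensional ℝ E] (G : Subgroup (E ≃ₗ[ℝ] E)) [Finite G] :
    ∃ B : LinearMap.BilinForm ℝ E, LinearMap.IsSymm B ∧ (∀ x, x ≠ 0 → 0 < B x x) ∧
      ∀ g ∈ G, ∀ x y, B (g x) (g y) = B x y := by
  have := Fintype.ofFinite G
  let φ := (Module.finBasis ℝ E).equivFun
  let B₀ : LinearMap.BilinForm ℝ E := (dotProductBilin ℝ ℝ).compl₁₂ φ.toLinearMap φ.toLinearMap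
  have hB₀ (x y : E) : B₀ x y = φ x ⬝ᵥ φ y := rfl
  refine ⟨∑ g : G, B₀.compl₁₂ g.1.toLinearMap g.1.toLinearMap, ⟨fun x y => ?_⟩, fun x hx => ?_,
    fun g hg x y => ?_⟩
  · simp only [LinearMap.sum_apply, LinearMap.compl₁₂_apply, hB₀, dotProduct_comm,
      RingHom.id_apply]
  · simp only [LinearMap.sum_apply, LinearMap.compl₁₂_apply, hB₀]
    refine Finset.sum_pos' (fun g _ => dotProduct_self_star_nonneg _) ⟨1, Finset.mem_univ _, ?_⟩
    refine (dotProduct_self_star_nonneg _).lt_of_ne' ?_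
    simpa [dotProduct_self_eq_zero] using hx
  · simp only [LinearMap.sum_apply, LinearMap.compl₁₂_apply]
    exact Fintype.sum_equiv (Equiv.mulRight ⟨g, hg⟩) _ _ fun h => by
      simp only [Equiv.coe_mulRight, Subgroup.coe_mul, LinearEquiv.coe_toLinearMap,
        LinearEquiv.mul_apply]

namespace PreWeylContext

variable {E : Type} [AddCommGroup E] [Module ℝ E] (C : PreWeylContext E)

theorem neg_mem {α : E} (h : α ∈ C.Φ) : -α ∈ C.Φ := by
  simpa [C.coroot_self α h, two_smul] using C.reflect_mem α h α h

theorem IsReflection.apply_apply {C : PreWeylContext E} {g : E ≃ₗ[ℝ] E} {α : E}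
    (hg : C.IsReflection g α) (hα : α ∈ C.Φ) (y : E) : g (g y) = y := by
  rw [hg (g y), hg y]
  simp only [map_sub, map_smul, C.coroot_self α hα, smul_eq_mul]
  module

theorem weylGroup_apply_mem (u : C.weylGroup) {β : E} (hβ : β ∈ C.Φ) : u.1 β ∈ C.Φ := by
  obtain ⟨u, hu⟩ := u
  induction hu using Subgroup.closure_induction'' generalizing β with
  | mem g hg =>
    obtain ⟨α, hα, hgα⟩ := hg
    simpa only [hgα β] using C.reflect_mem α hα β hβ
  | inv_mem g hg =>
    obtain ⟨α, hα, hgα⟩ := hg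
    rw [LinearEquiv.coe_inv, g.symm_apply_eq.mpr (hgα.apply_apply hα β).symm, hgα β]
    exact C.reflect_mem α hα β hβ
  | one => exact hβ
  | mul g h _ _ hg hh => exact hg (hh hβ)

instance finite_weylGroup : Finite C.weylGroup :=
  Finite.of_injective (fun u (β : C.Φ) => (⟨u.1 β, C.weylGroup_apply_mem u β.2⟩ : C.Φ))
    fun _ _ huv => Subtype.ext <| LinearEquiv.toLinearMap_injective <|
      LinearMap.ext_on C.span_eq_top fun β hβ => congrArg Subtype.val (congrFun huv ⟨β, hβ⟩)

theorem mem_pos {β : E} : β ∈ C.pos ↔ β ∈ C.Φ ∧ 0 < C.posFun β := Finset.mem_filter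

theorem mem_pos_or_neg_mem_pos {β : E} (h : β ∈ C.Φ) : β ∈ C.pos ∨ -β ∈ C.pos := by
  rcases (C.posFun_ne_zero β h).lt_or_gt with hlt | hgt
  · exact .inr (C.mem_pos.2 ⟨C.neg_mem h, by simpa using hlt⟩)
  · exact .inl (C.mem_pos.2 ⟨h, hgt⟩)

theorem eq_one_of_smul_mem_pos {α : E} {c : ℝ} (hα : α ∈ C.pos) (hcα : c • α ∈ C.pos) :
    c = 1 := by
  rcases C.reduced α (C.pos_subset hα) c (C.pos_subset hcα) with h | rfl
  · exact h
  · have h₁ := (C.mem_pos.1 hα).2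
    have h₂ := (C.mem_pos.1 hcα).2
    simp only [neg_one_smul, map_neg] at h₂
    linarith

theorem linearIndependent_pair_of_mem_pos {α β : E} (hα : α ∈ C.pos) (hβ : β ∈ C.pos)
    (hne : α ≠ β) : LinearIndependent ℝ ![α, β] := by
  refine LinearIndependent.pair_iff.2 fun s t hst => ?_
  by_cases hs : s = 0
  · subst hs
    simp only [zero_smul, zero_add, smul_eq_zero] at hst
    exact ⟨rfl, hst.resolve_right (C.root_ne_zero β (C.pos_subset hβ))⟩
  · have hαβ : α = (-t / s) • β := by
      rw [div_eq_inv_mul, mul_smul, neg_smul, ← eq_neg_of_add_eq_zero_left hst, smul_smul,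
        inv_mul_cancel₀ hs, one_smul]
    rw [C.eq_one_of_smul_mem_pos (c := -t / s) hβ (hαβ ▸ hα), one_smul] at hαβ
    exact absurd hαβ hne

theorem pos_induction {p : E → Prop}
    (h : ∀ β ∈ C.pos, (∀ γ ∈ C.pos, C.posFun γ < C.posFun β → p γ) → p β) :
    ∀ β ∈ C.pos, p β := by
  intro β hβ
  induction hn : #{γ ∈ C.pos | C.posFun γ < C.posFun β} using Nat.strong_induction_on
    generalizing β with
  | _ n ih =>
    refine h β hβ fun γ hγ hlt => ih _ ?_ γ hγ rfl
    rw [← hn]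
    refine Finset.card_lt_card ⟨fun δ hδ => ?_, fun hsub => ?_⟩
    · simp only [Finset.mem_filter] at hδ ⊢
      exact ⟨hδ.1, hδ.2.trans hlt⟩
    exact lt_irrefl _ (Finset.mem_filter.1 (hsub (Finset.mem_filter.2 ⟨hγ, hlt⟩))).2

section weylForm

variable [FiniteDimensional ℝ E]

noncomputable def weylForm : LinearMap.BilinForm ℝ E :=
  (LinearMap.BilinForm.exists_isSymm_pos_invariant C.weylGroup).choose

theorem weylForm_isSymm : LinearMap.IsSymm C.weylForm :=
  (LinearMap.BilinForm.exists_isSymm_pos_invariant C.weylGroup).choose_spec.1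

theorem weylForm_comm (x y : E) : C.weylForm x y = C.weylForm y x :=
  C.weylForm_isSymm.eq x y

theorem weylForm_self_pos {x : E} (hx : x ≠ 0) : 0 < C.weylForm x x :=
  (LinearMap.BilinForm.exists_isSymm_pos_invariant C.weylGroup).choose_spec.2.1 x hx

theorem weylForm_apply_weylGroup (u : C.weylGroup) (x y : E) :
    C.weylForm (u.1 x) (u.1 y) = C.weylForm x y :=
  (LinearMap.BilinForm.exists_isSymm_pos_invariant C.weylGroup).choose_spec.2.2 u.1 u.2 x y

end weylForm

section simple

variable [DecidableEq E]

theorem mem_simple {α : E} :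
    α ∈ C.simple ↔ α ∈ C.pos ∧ ¬ ∃ β ∈ C.pos, ∃ γ ∈ C.pos, α = β + γ := Finset.mem_filter

theorem mem_pos_of_mem_simple {α : E} (h : α ∈ C.simple) : α ∈ C.pos := (C.mem_simple.1 h).1

theorem mem_closure_simple {β : E} (hβ : β ∈ C.pos) :
    β ∈ AddSubmonoid.closure (C.simple : Set E) := by
  refine C.pos_induction (fun β hβ ih => ?_) β hβ
  by_cases hs : β ∈ C.simple
  · exact AddSubmonoid.subset_closure hs
  obtain ⟨β₁, h₁, β₂, h₂, rfl⟩ : ∃ β₁ ∈ C.pos, ∃ β₂ ∈ C.pos, β = β₁ + β₂ := by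
    simpa [C.mem_simple, hβ] using hs
  have hp₁ := (C.mem_pos.1 h₁).2
  have hp₂ := (C.mem_pos.1 h₂).2
  exact add_mem (ih β₁ h₁ (by rw [map_add]; linarith)) (ih β₂ h₂ (by rw [map_add]; linarith))

theorem exists_simple_weylForm_pos [FiniteDimensional ℝ E] {β : E} (hβ : β ∈ C.pos) :
    ∃ s ∈ C.simple, 0 < C.weylForm β s := by
  by_contra! h
  have hle : ∀ x ∈ AddSubmonoid.closure (C.simple : Set E), C.weylForm β x ≤ 0 := by
    intro x hx
    induction hx using AddSubmonoid.closure_induction with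
    | mem s hs => exact h s hs
    | zero => simp
    | add x y _ _ hx hy => rw [map_add]; exact add_nonpos hx hy
  exact (hle β (C.mem_closure_simple hβ)).not_gt
    (C.weylForm_self_pos (C.root_ne_zero β (C.pos_subset hβ)))

def simpleReflections : Set C.weylGroup := {s | ∃ α ∈ C.simple, C.IsReflection s.1 α}

end simple

end PreWeylContext

namespace WeylContext

variable {E : Type} [AddCommGroup E] [Module ℝ E] (C : WeylContext E)

theorem refl_apply {α : E} (h : α ∈ C.Φ) (y : E) : C.refl h y = y - C.coroot α y • α :=
  Module.reflection_apply y (C.coroot_self α h)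

theorem refl_refl {α : E} (h : α ∈ C.Φ) (y : E) : C.refl h (C.refl h y) = y :=
  PreWeylContext.IsReflection.apply_apply (C.refl_apply h) h y

theorem refl_self {α : E} (h : α ∈ C.Φ) : C.refl h α = -α := by
  rw [refl_apply, C.coroot_self α h, two_smul, sub_add_cancel_left]

theorem inv_refl {α : E} (h : α ∈ C.Φ) : (C.refl h)⁻¹ = C.refl h :=
  inv_eq_of_mul_eq_one_right <| LinearEquiv.ext (C.refl_refl h)

theorem isReflection_iff {g : E ≃ₗ[ℝ] E} {α : E} (h : α ∈ C.Φ) :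
    C.IsReflection g α ↔ g = C.refl h :=
  ⟨fun hg => LinearEquiv.ext fun y => (hg y).trans (C.refl_apply h y).symm,
    fun hg => hg ▸ C.refl_apply h⟩

section coroot

variable [FiniteDimensional ℝ E]

theorem coroot_mul_weylForm {α : E} (h : α ∈ C.Φ) (y : E) :
    C.coroot α y * C.weylForm α α = 2 * C.weylForm y α := by
  have hinv := C.weylForm_apply_weylGroup
    ⟨C.refl h, Subgroup.subset_closure ⟨α, h, C.refl_apply h⟩⟩ y α
  simp only [refl_apply, C.coroot_self α h, map_sub, map_smul, LinearMap.sub_apply,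
    LinearMap.smul_apply, smul_eq_mul] at hinv
  linarith

theorem coroot_apply_eq {α : E} (h : α ∈ C.Φ) (y : E) :
    C.coroot α y = 2 * C.weylForm y α / C.weylForm α α := by
  rw [eq_div_iff (C.weylForm_self_pos (C.root_ne_zero α h)).ne', C.coroot_mul_weylForm h]

theorem coroot_pos_iff {α : E} (h : α ∈ C.Φ) (y : E) :
    0 < C.coroot α y ↔ 0 < C.weylForm y α := by
  rw [C.coroot_apply_eq h, div_pos_iff_of_pos_right (C.weylForm_self_pos (C.root_ne_zero α h)),
    mul_pos_iff_of_pos_left two_pos]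

theorem refl_neg {α : E} (h : α ∈ C.Φ) (h' : -α ∈ C.Φ) : C.refl h' = C.refl h := by
  ext y
  simp only [refl_apply, C.coroot_apply_eq h', C.coroot_apply_eq h, map_neg, LinearMap.neg_apply]
  rw [mul_neg, neg_div, neg_smul_neg, neg_neg]

theorem coroot_weylGroup_apply (u : C.weylGroup) {β : E} (h : β ∈ C.Φ) (y : E) :
    C.coroot (u.1 β) (u.1 y) = C.coroot β y := by
  rw [C.coroot_apply_eq (C.weylGroup_apply_mem u h), C.coroot_apply_eq h,
    C.weylForm_apply_weylGroup, C.weylForm_apply_weylGroup]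

theorem isReflection_conj (u : C.weylGroup) {β : E} (h : β ∈ C.Φ) :
    C.IsReflection (u.1 * C.refl h * u.1⁻¹) (u.1 β) := by
  intro y
  obtain ⟨y, rfl⟩ := u.1.surjective y
  simp [refl_apply, C.coroot_weylGroup_apply u h]

theorem sub_mem_of_weylForm_pos {α β : E} (hα : α ∈ C.Φ) (hβ : β ∈ C.Φ)
    (hli : LinearIndependent ℝ ![α, β]) (hpos : 0 < C.weylForm α β) : α - β ∈ C.Φ := by
  obtain ⟨n, hn⟩ := C.crystallographic β hβ α hα
  obtain ⟨m, hm⟩ := C.crystallographic α hα β hβ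
  have hn' := C.coroot_mul_weylForm hβ α
  have hm' := C.coroot_mul_weylForm hα β
  rw [hn] at hn'
  rw [hm, C.weylForm_comm β α] at hm'
  have hαα := C.weylForm_self_pos (C.root_ne_zero α hα)
  have hββ := C.weylForm_self_pos (C.root_ne_zero β hβ)
  have hcs := (C.weylForm.apply_sq_lt_iff_linearIndependent_of_symm
    (fun x hx => C.weylForm_self_pos hx) C.weylForm_isSymm α β).2 hli
  have hn₀ : 0 < n := by exact_mod_cast (show (0 : ℝ) < n by nlinarith)
  have hm₀ : 0 < m := by exact_mod_cast (show (0 : ℝ) < m by nlinarith)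
  -- `n * m = 4 cos² θ < 4`, so one of the two Cartan integers is `1`
  have hnm : n * m < 4 := by
    have key : (n : ℝ) * m * (C.weylForm α α * C.weylForm β β) = 4 * C.weylForm α β ^ 2 := by
      linear_combination (m * C.weylForm α α) * hn' + (2 * C.weylForm α β) * hm'
    have : (n : ℝ) * m < 4 :=
      lt_of_mul_lt_mul_right (a := C.weylForm α α * C.weylForm β β) (by linarith) (by positivity)
    exact_mod_cast this
  obtain rfl | rfl : n = 1 ∨ m = 1 := by
    by_contra! hne
    nlinarith [show 2 ≤ n by omega, show 2 ≤ m by omega]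
  · simpa [hn] using C.reflect_mem β hβ α hα
  · simpa [hm] using C.neg_mem (C.reflect_mem α hα β hβ)

end coroot

section simple

variable [DecidableEq E] [FiniteDimensional ℝ E]

theorem weylForm_simple_nonpos {s t : E} (hs : s ∈ C.simple) (ht : t ∈ C.simple) (hne : s ≠ t) :
    C.weylForm s t ≤ 0 := by
  by_contra! hpos
  have hsp := C.mem_pos_of_mem_simple hs
  have htp := C.mem_pos_of_mem_simple ht
  have hst := C.sub_mem_of_weylForm_pos (C.simple_subset hs) (C.simple_subset ht)
    (C.linearIndependent_pair_of_mem_pos hsp htp hne) hpos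
  rcases C.mem_pos_or_neg_mem_pos hst with h | h
  · exact (C.mem_simple.1 hs).2 ⟨s - t, h, t, htp, by abel⟩
  · exact (C.mem_simple.1 ht).2 ⟨-(s - t), h, s, hsp, by abel⟩

theorem linearIndependent_simple : LinearIndependent ℝ ((↑) : C.simple → E) :=
  C.weylForm.linearIndependent_of_pairwise_le_zero (fun _ hx => C.weylForm_self_pos hx) C.posFun _
    (fun s => (C.mem_pos.1 (C.mem_pos_of_mem_simple s.2)).2)
    fun s t hst => C.weylForm_simple_nonpos s.2 t.2 (Subtype.coe_injective.ne hst)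

theorem span_simple : ⊤ ≤ Submodule.span ℝ (Set.range ((↑) : C.simple → E)) := by
  have hsub : (C.simple : Set E) ⊆ Submodule.span ℝ (Set.range ((↑) : C.simple → E)) :=
    fun s hs => Submodule.subset_span ⟨⟨s, hs⟩, rfl⟩
  have hpos : ∀ β ∈ C.pos, β ∈ Submodule.span ℝ (Set.range ((↑) : C.simple → E)) := fun β hβ =>
    AddSubmonoid.closure_le (S := (Submodule.span ℝ _).toAddSubmonoid).2 hsub
      (C.mem_closure_simple hβ)
  rw [← C.span_eq_top, Submodule.span_le]
  intro β hβ
  rcases C.mem_pos_or_neg_mem_pos hβ with h | h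
  · exact hpos β h
  · simpa using neg_mem (hpos _ h)

noncomputable def simpleBasis : Module.Basis C.simple ℝ E :=
  .mk C.linearIndependent_simple C.span_simple

theorem simpleBasis_apply (s : C.simple) : C.simpleBasis s = s := Module.Basis.mk_apply _ _ _

theorem simpleBasis_coord_nonneg {β : E} (hβ : β ∈ C.pos) (s : C.simple) :
    0 ≤ C.simpleBasis.coord s β := by
  refine AddSubmonoid.closure_induction (motive := fun x _ => 0 ≤ C.simpleBasis.coord s x)
    (fun t ht => ?_) (by simp) (fun x y _ _ hx hy => by rw [map_add]; exact add_nonneg hx hy)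
    (C.mem_closure_simple hβ)
  rw [show t = C.simpleBasis ⟨t, ht⟩ from (C.simpleBasis_apply ⟨t, ht⟩).symm,
    Module.Basis.coord_apply, Module.Basis.repr_self, Finsupp.single_apply]
  split_ifs <;> norm_num

theorem refl_mem_pos_of_mem_simple {α β : E} (hα : α ∈ C.simple) (hβ : β ∈ C.pos)
    (hne : β ≠ α) : C.refl (C.simple_subset hα) β ∈ C.pos := by
  have hαΦ := C.simple_subset hα
  refine (C.mem_pos_or_neg_mem_pos ((C.refl_apply hαΦ β).symm ▸
    C.reflect_mem α hαΦ β (C.pos_subset hβ))).resolve_right fun hneg => hne ?_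
  set a : C.simple := ⟨α, hα⟩
  -- off `a`, the coordinates of `β` and of `-s_α β = kα - β` are opposite and both `≥ 0`
  have hcoord : ∀ s ≠ a, C.simpleBasis.coord s β = 0 := by
    intro s hs
    have h₁ := C.simpleBasis_coord_nonneg hneg s
    have h₂ := C.simpleBasis_coord_nonneg hβ s
    have hα₀ : C.simpleBasis.coord s α = 0 := by
      rw [show α = C.simpleBasis a from (C.simpleBasis_apply a).symm, Module.Basis.coord_apply,
        Module.Basis.repr_self, Finsupp.single_eq_of_ne hs]
    rw [refl_apply, map_neg, map_sub, map_smul, hα₀, smul_zero, sub_zero] at h₁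
    linarith
  have hβα : β = C.simpleBasis.coord a β • α := by
    conv_lhs => rw [← C.simpleBasis.sum_repr β]
    rw [Finset.sum_eq_single a (fun s _ hs => by rw [← Module.Basis.coord_apply, hcoord s hs,
      zero_smul]) (by simp), Module.Basis.coord_apply, C.simpleBasis_apply]
  rw [hβα, C.eq_one_of_smul_mem_pos (c := C.simpleBasis.coord a β) (C.mem_pos_of_mem_simple hα)
    (hβα ▸ hβ), one_smul]

theorem sW_mem_closure_simpleReflections {α : E} (hα : α ∈ C.pos) :
    C.sW (C.pos_subset hα) ∈ Subgroup.closure C.simpleReflections := by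
  refine C.pos_induction
    (p := fun β => ∀ h : β ∈ C.Φ, C.sW h ∈ Subgroup.closure C.simpleReflections)
    (fun β hβ ih h => ?_) α hα _
  by_cases hsimple : β ∈ C.simple
  · exact Subgroup.subset_closure ⟨β, hsimple, C.refl_apply h⟩
  obtain ⟨s, hs, hβs⟩ := C.exists_simple_weylForm_pos hβ
  have hsΦ := C.simple_subset hs
  have hγ := C.refl_mem_pos_of_mem_simple hs hβ (ne_of_mem_of_not_mem hs hsimple).symm
  have hlt : C.posFun (C.refl hsΦ β) < C.posFun β := by
    have := (C.coroot_pos_iff hsΦ β).2 hβs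
    have := (C.mem_pos.1 (C.mem_pos_of_mem_simple hs)).2
    rw [refl_apply, map_sub, map_smul, smul_eq_mul]
    nlinarith
  have hconj : C.sW h = C.sW hsΦ * C.sW (C.pos_subset hγ) * C.sW hsΦ := by
    have := C.isReflection_conj (C.sW hsΦ) (C.pos_subset hγ)
    rw [show (C.sW hsΦ).1 (C.refl hsΦ β) = β from C.refl_refl hsΦ β, C.isReflection_iff h] at this
    exact Subtype.ext (by simpa [sW, inv_refl] using this.symm)
  have hsr : C.sW hsΦ ∈ Subgroup.closure C.simpleReflections :=
    Subgroup.subset_closure ⟨s, hs, C.refl_apply hsΦ⟩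
  rw [hconj]
  exact mul_mem (mul_mem hsr (ih _ hγ hlt _)) hsr

theorem closure_simpleReflections : Subgroup.closure C.simpleReflections = ⊤ := by
  rw [eq_top_iff]
  rintro ⟨u, hu⟩ -
  induction hu using Subgroup.closure_induction with
  | mem g hg =>
    obtain ⟨α, hα, hgα⟩ := hg
    obtain rfl := (C.isReflection_iff hα).1 hgα
    rcases C.mem_pos_or_neg_mem_pos hα with hp | hp
    · exact C.sW_mem_closure_simpleReflections hp
    · simpa [sW, C.refl_neg hα] using C.sW_mem_closure_simpleReflections hp
  | one => exact one_mem _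
  | mul x y _ _ hx hy => exact mul_mem hx hy
  | inv x _ hx => exact inv_mem hx

theorem inv_eq_self_of_mem_simpleReflections {s : C.weylGroup} (hs : s ∈ C.simpleReflections) :
    s⁻¹ = s := by
  obtain ⟨α, hα, hsα⟩ := hs
  rw [C.isReflection_iff (C.simple_subset hα)] at hsα
  exact Subtype.ext (by rw [Subgroup.coe_inv, hsα, inv_refl])

theorem exists_list_prod_eq (w : C.weylGroup) :
    ∃ l : List C.weylGroup, (∀ s ∈ l, s ∈ C.simpleReflections) ∧ l.prod = w := by
  have hinv : C.simpleReflections⁻¹ ⊆ C.simpleReflections := fun s hs => by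
    have h := C.inv_eq_self_of_mem_simpleReflections hs
    rw [inv_inv] at h
    rwa [Set.mem_inv, ← h] at hs
  refine Submonoid.exists_list_of_mem_closure ?_
  rw [← Set.union_eq_self_of_subset_right hinv, ← Subgroup.closure_toSubmonoid,
    closure_simpleReflections]
  trivial

theorem exists_list_prod_eq_and_length_eq_len (w : C.weylGroup) :
    ∃ l : List C.weylGroup,
      (∀ s ∈ l, s ∈ C.simpleReflections) ∧ l.prod = w ∧ l.length = C.len w := by
  obtain ⟨l, hl, hw⟩ := C.exists_list_prod_eq w
  exact Nat.sInf_mem (s := {n | ∃ l : List C.weylGroup,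
    (∀ s ∈ l, s ∈ C.simpleReflections) ∧ l.prod = w ∧ l.length = n}) ⟨l.length, l, hl, hw, rfl⟩

end simple

section groupAlgebra

def wPHom (w : C.weylGroup) : C.P →+ C.P where
  toFun := C.wP w
  map_zero' := Subtype.ext (map_zero w.1)
  map_add' x y := Subtype.ext (map_add w.1 x.1 y.1)

theorem wP_neg (w : C.weylGroup) (x : C.P) : C.wP w (-x) = -C.wP w x := map_neg (C.wPHom w) x

theorem act_mul (w : C.weylGroup) (f g : AddMonoidAlgebra ℤ C.P) :
    C.act w (f * g) = C.act w f * C.act w g :=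
  map_mul (AddMonoidAlgebra.mapDomainRingHom ℤ (C.wPHom w)) f g

theorem act_apply_one (w : C.weylGroup) : C.act w 1 = 1 :=
  map_one (AddMonoidAlgebra.mapDomainRingHom ℤ (C.wPHom w))

theorem act_prod {ι : Type} (w : C.weylGroup) (s : Finset ι) (f : ι → AddMonoidAlgebra ℤ C.P) :
    C.act w (∏ i ∈ s, f i) = ∏ i ∈ s, C.act w (f i) :=
  map_prod (AddMonoidAlgebra.mapDomainRingHom ℤ (C.wPHom w)) f s

theorem act_e (w : C.weylGroup) (x : C.P) : C.act w (C.e x) = C.e (C.wP w x) :=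
  AddMonoidAlgebra.mapDomain_single

theorem act_act (u v : C.weylGroup) (f : AddMonoidAlgebra ℤ C.P) :
    C.act u (C.act v f) = C.act (u * v) f :=
  (LinearMap.congr_fun (AddMonoidAlgebra.mapDomainLinearMap_comp (C.wP v) (C.wP u)) f).symm

theorem act_one_apply (f : AddMonoidAlgebra ℤ C.P) : C.act 1 f = f := by
  have : C.wP 1 = id := rfl
  ext
  simp [act, this]

theorem e_add (x y : C.P) : C.e (x + y) = C.e x * C.e y := by
  simp [e, AddMonoidAlgebra.single_mul_single]

variable [DecidableEq E]

theorem intertwiner_apply (w : C.weylGroup) (f : AddMonoidAlgebra ℤ C.P) :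
    C.intertwiner w f =
      ((-1 : ℤ) ^ C.len w) • (C.e (-C.rhoP) * C.act w⁻¹ (C.e C.rhoP * f)) := by
  induction f using AddMonoidAlgebra.induction_linear with
  | zero => simp
  | add f g hf hg => rw [map_add, hf, hg, mul_add, map_add, mul_add, smul_add]
  | single a b =>
    simp only [intertwiner, LinearMap.smul_apply, AddMonoidAlgebra.mapDomainLinearMap_single, e,
      AddMonoidAlgebra.single_mul_single, one_mul, act, add_comm C.rhoP a, neg_add_eq_sub]

noncomputable def posRoots : Finset C.P := C.pos.preimage Subtype.val Subtype.val_injective.injOn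

theorem mem_posRoots {x : C.P} : x ∈ C.posRoots ↔ (x : E) ∈ C.pos := Finset.mem_preimage

theorem denom_eq_prod_posRoots : C.denom = ∏ β ∈ C.posRoots, (1 - C.e (-β)) :=
  Finset.prod_bij (fun β _ => C.posP β.2) (fun β _ => C.mem_posRoots.2 β.2)
    (fun β₁ _ β₂ _ h => Subtype.ext (congrArg Subtype.val h : (C.posP β₁.2 : E) = C.posP β₂.2))
    (fun x hx => ⟨⟨x, C.mem_posRoots.1 hx⟩, Finset.mem_attach _ _, rfl⟩) fun _ _ => rfl

variable [FiniteDimensional ℝ E]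

theorem refl_mem_pos_erase {α β : E} (hα : α ∈ C.simple) (hβ : β ∈ C.pos.erase α) :
    C.refl (C.simple_subset hα) β ∈ C.pos.erase α := by
  obtain ⟨hne, hβ⟩ := Finset.mem_erase.1 hβ
  refine Finset.mem_erase.2 ⟨fun h => ?_, C.refl_mem_pos_of_mem_simple hα hβ hne⟩
  have hβα : β = -α := by rw [← C.refl_refl (C.simple_subset hα) β, h, refl_self]
  have h₁ := (C.mem_pos.1 hβ).2
  have h₂ := (C.mem_pos.1 (C.mem_pos_of_mem_simple hα)).2
  rw [hβα, map_neg] at h₁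
  linarith

theorem refl_rho {α : E} (hα : α ∈ C.simple) :
    C.refl (C.simple_subset hα) C.rho = C.rho - α := by
  have hα' := C.simple_subset hα
  have hsum : ∑ β ∈ C.pos.erase α, C.refl hα' β = ∑ β ∈ C.pos.erase α, β :=
    Finset.sum_nbij' _ _ (fun _ => C.refl_mem_pos_erase hα) (fun _ => C.refl_mem_pos_erase hα)
      (fun β _ => C.refl_refl hα' β) (fun β _ => C.refl_refl hα' β) fun _ _ => rfl
  simp only [PreWeylContext.rho, ← Finset.add_sum_erase _ _ (C.mem_pos_of_mem_simple hα),
    map_smul, map_add, map_sum, hsum, refl_self]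
  module

theorem act_sW_denom {α : E} (hα : α ∈ C.simple) :
    C.act (C.sW (C.simple_subset hα)) C.denom =
      -(C.e (C.rootP (C.simple_subset hα)) * C.denom) := by
  set s := C.sW (C.simple_subset hα)
  set a := C.rootP (C.simple_subset hα)
  have ha : a ∈ C.posRoots := C.mem_posRoots.2 (C.mem_pos_of_mem_simple hα)
  have hsa : C.wP s a = -a := Subtype.ext (C.refl_self (C.simple_subset hα))
  have herase (β : C.P) : β ∈ C.posRoots.erase a ↔ (β : E) ∈ C.pos.erase α := by
    rw [Finset.mem_erase, Finset.mem_erase, mem_posRoots, Ne, Subtype.ext_iff]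
    rfl
  have hmaps : ∀ β ∈ C.posRoots.erase a, C.wP s β ∈ C.posRoots.erase a := fun β hβ =>
    (herase _).2 (C.refl_mem_pos_erase hα ((herase β).1 hβ))
  have hinv (β : C.P) : C.wP s (C.wP s β) = β :=
    Subtype.ext (C.refl_refl (C.simple_subset hα) β)
  have hperm : ∏ β ∈ C.posRoots.erase a, (1 - C.e (-C.wP s β)) =
      ∏ β ∈ C.posRoots.erase a, (1 - C.e (-β)) :=
    Finset.prod_nbij' _ _ hmaps hmaps (fun β _ => hinv β) (fun β _ => hinv β) fun _ _ => rfl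
  have hea : C.e a * C.e (-a) = 1 := by rw [← e_add, add_neg_cancel]; rfl
  rw [denom_eq_prod_posRoots, act_prod, ← Finset.mul_prod_erase _ _ ha,
    ← Finset.mul_prod_erase _ _ ha]
  simp only [map_sub, act_apply_one, act_e, wP_neg, hsa, neg_neg, hperm]
  linear_combination -(∏ β ∈ C.posRoots.erase a, (1 - C.e (-β))) * hea

theorem act_sW_e_rhoP_mul_denom {α : E} (hα : α ∈ C.simple) :
    C.act (C.sW (C.simple_subset hα)) (C.e C.rhoP * C.denom) = -(C.e C.rhoP * C.denom) := by
  have hρ : C.wP (C.sW (C.simple_subset hα)) C.rhoP = C.rhoP - C.rootP (C.simple_subset hα) :=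
    Subtype.ext (C.refl_rho hα)
  rw [act_mul, act_e, hρ, C.act_sW_denom hα, mul_neg, ← mul_assoc, ← e_add, sub_add_cancel]

theorem act_list_prod_e_rhoP_mul_denom (l : List C.weylGroup)
    (hl : ∀ s ∈ l, s ∈ C.simpleReflections) :
    C.act l.prod (C.e C.rhoP * C.denom) = ((-1 : ℤ) ^ l.length) • (C.e C.rhoP * C.denom) := by
  induction l with
  | nil => simp [act_one_apply]
  | cons s l ih =>
    obtain ⟨α, hα, hsα⟩ := hl s List.mem_cons_self
    obtain rfl : s = C.sW (C.simple_subset hα) :=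
      Subtype.ext ((C.isReflection_iff (C.simple_subset hα)).1 hsα)
    rw [List.prod_cons, ← act_act, ih fun t ht => hl t (List.mem_cons_of_mem _ ht), map_zsmul,
      C.act_sW_e_rhoP_mul_denom hα, List.length_cons, pow_succ, mul_comm, mul_smul,
      neg_one_zsmul, smul_neg]

theorem e_rhoP_mul_denom_mem_antiInv : C.e C.rhoP * C.denom ∈ C.antiInv := fun w => by
  obtain ⟨l, hl, rfl, hlen⟩ := C.exists_list_prod_eq_and_length_eq_len w
  rw [← hlen]
  exact C.act_list_prod_e_rhoP_mul_denom l hl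

theorem act_inv_of_mem_antiInv {f : AddMonoidAlgebra ℤ C.P} (hf : f ∈ C.antiInv)
    (w : C.weylGroup) : C.act w⁻¹ f = ((-1 : ℤ) ^ C.len w) • f := by
  have h := congrArg (C.act w⁻¹) (hf w)
  rw [act_act, inv_mul_cancel, act_one_apply, map_zsmul] at h
  conv_rhs => rw [h, smul_smul, ← pow_add, Even.neg_one_pow ⟨_, rfl⟩, one_smul]

end groupAlgebra

end WeylContext

/-- The intertwining operators fix the image of the localization map on invariants: for every
`w ∈ W` and every `W`-invariant `f ∈ ℤ[P]`,
`I_w(f · ∏_{α ∈ Φ⁺} (1 - e(-α))) = f · ∏_{α ∈ Φ⁺} (1 - e(-α))`. -/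
theorem intertwiner_fixes_localized_invariants {E : Type} [AddCommGroup E] [Module ℝ E] [DecidableEq E] [FiniteDimensional ℝ E]
    (C : WeylContext E)
    (w : C.weylGroup) (f : AddMonoidAlgebra ℤ C.P)
    (hf : ∀ w' : C.weylGroup, C.act w' f = f) :
    C.intertwiner w (f * C.denom) = f * C.denom := by
  have hρ : C.e (-C.rhoP) * C.e C.rhoP = 1 := by rw [← C.e_add, neg_add_cancel]; rfl
  rw [C.intertwiner_apply, mul_left_comm, C.act_mul, hf,
    C.act_inv_of_mem_antiInv C.e_rhoP_mul_denom_mem_antiInv, mul_smul_comm, mul_smul_comm,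
    smul_smul, ← pow_add, Even.neg_one_pow ⟨_, rfl⟩, one_smul]
  linear_combination (f * C.denom) * hρ
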